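/- For each fixed x > 0, the ratio Φ_{2s}(x)/Φ_{2s-}(x) converges to 1 as s → ∞. -/

import Mathlib

/-!
On the circle `|z| = r > 1` the function `exp (x z) z ^ a / (z ^ 2 - 1) ^ (s + 1)` is the sum of
an absolutely convergent double Laurent series (the exponential series times the binomial series
in `z⁻²`), and integrating term by term keeps only the coefficients of `z⁻¹`. With the partial
fractions `1 / ((z - 1) ^ (s + 1) (z + 1) ^ s) = (z + 1) / (z ^ 2 - 1) ^ (s + 1)` and
`1 / ((z - 1) ^ s (z + 1) ^ (s + 1)) = (z - 1) / (z ^ 2 - 1) ^ (s + 1)` this gives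
`Φp = A + B` and `Φm = A - B` with the positive series
`A = ∑ C(m + s, s) x ^ (2m + 2s) / (2m + 2s)!` and
`B = ∑ C(m + s, s) x ^ (2m + 2s + 1) / (2m + 2s + 1)!`.
Comparing termwise, `B ≤ x / (2s + 1) · A`, so `B / A → 0` and `Φp / Φm → 1`.
-/

open Complex Metric Filter Topology
open scoped Real Nat

theorem hasSum_circleIntegral_of_norm_le {E : Type*} [NormedAddCommGroup E] [NormedSpace ℂ E]
    {ι : Type*} [Countable ι] {f : ι → ℂ → E} {F : ℂ → E} {c : ℂ} {R : ℝ} (hR : 0 ≤ R)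
    (hf : ∀ i, CircleIntegrable (f i) c R) {M : ι → ℝ} (hM : Summable M)
    (hfM : ∀ i, ∀ z ∈ sphere c R, ‖f i z‖ ≤ M i)
    (hF : ∀ z ∈ sphere c R, HasSum (fun i => f i z) (F z)) :
    HasSum (fun i => ∮ z in C(c, R), f i z) (∮ z in C(c, R), F z) := by
  refine intervalIntegral.hasSum_integral_of_dominated_convergence (fun i _ => R * M i)
    (fun i => ?_) (fun i => ?_) ?_ ?_ ?_
  · simp only [deriv_circleMap]
    apply_rules [MeasureTheory.AEStronglyMeasurable.smul, (hf i).def'.1]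
    apply Measurable.aestronglyMeasurable
    fun_prop
  · refine .of_forall fun θ _ => ?_
    rw [deriv_circleMap, norm_smul, norm_mul, norm_circleMap_zero, norm_I, mul_one,
      abs_of_nonneg hR]
    exact mul_le_mul_of_nonneg_left (hfM i _ (circleMap_mem_sphere c hR θ)) hR
  · exact .of_forall fun _ _ => hM.mul_left R
  · exact intervalIntegrable_const
  · exact .of_forall fun θ _ => (hF _ (circleMap_mem_sphere c hR θ)).const_smul _

theorem circleIntegral_const_mul_zpow (a : ℂ) (n : ℤ) {R : ℝ} (hR : R ≠ 0) :
    (∮ z in C(0, R), a * z ^ n) = if n = -1 then 2 * π * I * a else 0 := by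
  rw [circleIntegral.integral_const_mul]
  split_ifs with hn
  · subst hn
    simpa [mul_comm] using congrArg (a * ·) (circleIntegral.integral_sub_center_inv 0 hR)
  · simpa using congrArg (a * ·) (circleIntegral.integral_sub_zpow_of_ne hn 0 0 R)

noncomputable def laurentTerm (w : ℂ) (s a : ℕ) (p : ℕ × ℕ) (z : ℂ) : ℂ :=
  ((p.1 + s).choose s : ℂ) * w ^ p.2 / p.2 ! * z ^ ((p.2 + a : ℤ) - 2 * (p.1 + s + 1))

theorem laurentTerm_eq {z : ℂ} (hz : z ≠ 0) (w : ℂ) (s a : ℕ) (p : ℕ × ℕ) :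
    laurentTerm w s a p z = (((p.1 + s).choose s : ℂ) * ((z ^ 2)⁻¹) ^ p.1) *
      ((w * z) ^ p.2 / p.2 !) * (z ^ a * ((z ^ 2) ^ (s + 1))⁻¹) := by
  have hexp : (p.2 + a : ℤ) - 2 * (p.1 + s + 1) = (p.2 + a : ℕ) - (2 * (p.1 + s + 1) : ℕ) := by
    push_cast; ring
  rw [laurentTerm, hexp, zpow_sub₀ hz, zpow_natCast, zpow_natCast]
  simp only [← pow_mul, inv_pow, mul_pow, pow_add]
  field_simp
  ring

theorem summable_norm_laurentTerm_and_hasSum {z : ℂ} (hz : 1 < ‖z‖) (w : ℂ) (s a : ℕ) :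
    Summable (fun p => ‖laurentTerm w s a p z‖) ∧
      HasSum (fun p => laurentTerm w s a p z) (exp (w * z) * z ^ a / (z ^ 2 - 1) ^ (s + 1)) := by
  have hz0 : z ≠ 0 := norm_pos_iff.mp (one_pos.trans hz)
  have hq : ‖(z ^ 2)⁻¹‖ < 1 := by
    rw [norm_inv, norm_pow]; exact inv_lt_one_of_one_lt₀ (one_lt_pow₀ hz two_ne_zero)
  have hg := hasSum_choose_mul_geometric_of_norm_lt_one s hq
  have hgn : Summable fun m : ℕ => ‖((m + s).choose s : ℂ) * ((z ^ 2)⁻¹) ^ m‖ := by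
    refine (summable_choose_mul_geometric_of_norm_lt_one (R := ℝ) s
      (r := ‖(z ^ 2)⁻¹‖) (by rwa [norm_norm])).congr fun m => ?_
    rw [norm_mul, norm_pow, Complex.norm_natCast]
  have he : HasSum (fun k : ℕ => (w * z) ^ k / k !) (exp (w * z)) := by
    simpa [Complex.exp_eq_exp_ℂ] using NormedSpace.expSeries_div_hasSum_exp (w * z)
  have hen : Summable fun k : ℕ => ‖(w * z) ^ k / (k ! : ℂ)‖ := by
    refine (Real.summable_pow_div_factorial ‖w * z‖).congr fun k => ?_
    rw [norm_div, norm_pow, Complex.norm_natCast]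
  have hval : exp (w * z) * z ^ a / (z ^ 2 - 1) ^ (s + 1) =
      1 / (1 - (z ^ 2)⁻¹) ^ (s + 1) * exp (w * z) * (z ^ a * ((z ^ 2) ^ (s + 1))⁻¹) := by
    have h1 : (1 : ℂ) - (z ^ 2)⁻¹ ≠ 0 := sub_ne_zero.mpr fun h => by simp [← h] at hq
    have h2 : z ^ 2 - 1 = z ^ 2 * (1 - (z ^ 2)⁻¹) := by field_simp
    rw [h2, mul_pow]
    field_simp
  have hsum := summable_mul_of_summable_norm hgn hen
  have hprod := (HasSum.mul hg he hsum).mul_right (z ^ a * ((z ^ 2) ^ (s + 1))⁻¹)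
  simp only [laurentTerm_eq hz0, hval]
  refine ⟨?_, hprod⟩
  exact ((Summable.mul_norm hgn hen).mul_right ‖z ^ a * ((z ^ 2) ^ (s + 1))⁻¹‖).congr
    fun p => (norm_mul _ _).symm

theorem hasSum_circleIntegral_exp_mul_pow_div (w : ℂ) {R : ℝ} (hR : 1 < R) {s a : ℕ}
    (ha : a ≤ 2 * s + 1) :
    HasSum (fun m : ℕ => ((m + s).choose s : ℂ) * w ^ (2 * m + (2 * s + 1 - a)) /
        (2 * m + (2 * s + 1 - a))!)
      ((2 * π * I)⁻¹ * ∮ z in C(0, R), exp (w * z) * z ^ a / (z ^ 2 - 1) ^ (s + 1)) := by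
  have hR0 : 0 < R := one_pos.trans hR
  have hsphere : ∀ z ∈ sphere (0 : ℂ) R, ‖z‖ = R := fun z hz => by simpa using hz
  have hR' : 1 < ‖(R : ℂ)‖ := by rwa [Complex.norm_real, Real.norm_of_nonneg hR0.le]
  have hterms := hasSum_circleIntegral_of_norm_le hR0.le (f := laurentTerm w s a)
    (fun p => ContinuousOn.circleIntegrable hR0.le fun z hz =>
      (continuousAt_const.mul (continuousAt_zpow₀ _ _ (Or.inl
        (ne_zero_of_norm_ne_zero ((hsphere z hz).trans_ne hR0.ne'))))).continuousWithinAt)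
    (summable_norm_laurentTerm_and_hasSum hR' w s a).1
    (fun p z hz => by
      simp only [laurentTerm, norm_mul, norm_zpow, hsphere z hz, norm_real,
        Real.norm_of_nonneg hR0.le, le_refl])
    (fun z hz => (summable_norm_laurentTerm_and_hasSum (by rw [hsphere z hz]; exact hR) w s a).2)
  have hexp (p : ℕ × ℕ) :
      (p.2 + a : ℤ) - 2 * (p.1 + s + 1) = -1 ↔ p.2 = 2 * p.1 + (2 * s + 1 - a) := by
    omega
  have heval (p : ℕ × ℕ) : (∮ z in C(0, R), laurentTerm w s a p z) =
      if p.2 = 2 * p.1 + (2 * s + 1 - a) then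
        2 * π * I * (((p.1 + s).choose s : ℂ) * w ^ p.2 / p.2 !) else 0 := by
    simp only [laurentTerm, circleIntegral_const_mul_zpow _ _ hR0.ne', hexp]
  -- only the terms with `z ^ (-1)` survive, and they lie on the graph of `m ↦ 2m + 2s + 1 - a`
  have hinj : Function.Injective fun m : ℕ => (m, 2 * m + (2 * s + 1 - a)) :=
    fun m n h => (Prod.ext_iff.mp h).1
  have hdiag := ((hinj.hasSum_iff fun p hp => by
    rw [heval, if_neg]
    rintro h
    exact hp ⟨p.1, Prod.ext rfl h.symm⟩).mpr hterms).mul_left (2 * π * I)⁻¹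
  refine hdiag.congr_fun fun m => ?_
  simp only [Function.comp_apply, heval, if_pos, ← mul_assoc, inv_mul_cancel₀ two_pi_I_ne_zero,
    one_mul]

noncomputable def chooseExpSeries (s j : ℕ) (x : ℝ) : ℝ :=
  ∑' m : ℕ, ((m + s).choose s : ℝ) * x ^ (2 * m + j) / (2 * m + j)!

theorem summable_chooseExpSeries (s j : ℕ) {x : ℝ} (hx : 0 ≤ x) :
    Summable fun m : ℕ => ((m + s).choose s : ℝ) * x ^ (2 * m + j) / (2 * m + j)! := by
  refine Summable.of_nonneg_of_le (fun m => by positivity) (fun m => ?_)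
    ((Real.summable_pow_div_factorial (2 * x ^ 2)).mul_left (2 ^ s * x ^ j))
  have hchoose : ((m + s).choose s : ℝ) ≤ 2 ^ m * 2 ^ s := by
    rw [← pow_add]; exact_mod_cast Nat.choose_le_two_pow (m + s) s
  have hfact : (m ! : ℝ) ≤ (2 * m + j)! := by exact_mod_cast Nat.factorial_le (by omega)
  calc ((m + s).choose s : ℝ) * x ^ (2 * m + j) / (2 * m + j)!
      ≤ 2 ^ m * 2 ^ s * x ^ (2 * m + j) / m ! := by gcongr
    _ = 2 ^ s * x ^ j * ((2 * x ^ 2) ^ m / m !) := by ring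

theorem chooseExpSeries_pos (s j : ℕ) {x : ℝ} (hx : 0 < x) : 0 < chooseExpSeries s j x := by
  refine lt_of_lt_of_le ?_
    ((summable_chooseExpSeries s j hx.le).le_tsum 0 fun m _ => by positivity)
  simp only [zero_add, Nat.choose_self, Nat.cast_one, one_mul, mul_zero]
  positivity

theorem chooseExpSeries_succ_le (s j : ℕ) {x : ℝ} (hx : 0 ≤ x) :
    chooseExpSeries s (j + 1) x ≤ x / (j + 1) * chooseExpSeries s j x := by
  rw [chooseExpSeries, chooseExpSeries, ← tsum_mul_left]
  refine (summable_chooseExpSeries s (j + 1) hx).tsum_le_tsum (fun m => ?_)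
    ((summable_chooseExpSeries s j hx).mul_left _)
  have hj : (j + 1 : ℝ) ≤ (2 * m + j + 1 : ℕ) := by
    push_cast; linarith [m.cast_nonneg (α := ℝ)]
  calc ((m + s).choose s : ℝ) * x ^ (2 * m + (j + 1)) / (2 * m + (j + 1))!
      = x / (2 * m + j + 1 : ℕ) * (((m + s).choose s : ℝ) * x ^ (2 * m + j) / (2 * m + j)!) := by
        rw [← add_assoc, Nat.factorial_succ, Nat.cast_mul, pow_succ]
        field_simp
    _ ≤ x / (j + 1) * (((m + s).choose s : ℝ) * x ^ (2 * m + j) / (2 * m + j)!) := by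
        gcongr

theorem tendsto_add_div_sub_of_le_mul {ι : Type*} {l : Filter ι} {A B ε : ι → ℝ}
    (hA : ∀ i, 0 < A i) (hB : ∀ i, 0 ≤ B i) (hBA : ∀ i, B i ≤ ε i * A i)
    (hε : Tendsto ε l (𝓝 0)) :
    Tendsto (fun i => (A i + B i) / (A i - B i)) l (𝓝 1) := by
  have hratio : Tendsto (fun i => B i / A i) l (𝓝 0) :=
    squeeze_zero (fun i => div_nonneg (hB i) (hA i).le)
      (fun i => (div_le_iff₀ (hA i)).mpr (hBA i)) hε
  have hlim := ((tendsto_const_nhds (x := (1 : ℝ))).add hratio).div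
    ((tendsto_const_nhds (x := (1 : ℝ))).sub hratio) (by norm_num)
  rw [add_zero, sub_zero, div_one] at hlim
  refine hlim.congr fun i => ?_
  have := (hA i).ne'
  simp only [Pi.div_apply]
  field_simp

theorem sq_sub_one_ne_zero_of_mem_sphere {R : ℝ} (hR : 1 < R) {z : ℂ} (hz : z ∈ sphere 0 R) :
    z ^ 2 - 1 ≠ 0 := by
  intro h
  have h1 : R ^ 2 = 1 := by
    rw [← mem_sphere_zero_iff_norm.mp hz, ← norm_pow, sub_eq_zero.mp h, norm_one]
  nlinarith

theorem circleIntegrable_exp_mul_pow_div (w : ℂ) {R : ℝ} (hR : 1 < R) (s a : ℕ) :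
    CircleIntegrable (fun z => exp (w * z) * z ^ a / (z ^ 2 - 1) ^ (s + 1)) 0 R := by
  refine ContinuousOn.circleIntegrable (one_pos.trans hR).le ?_
  refine (by fun_prop : Continuous fun z : ℂ => exp (w * z) * z ^ a).continuousOn.div
    (by fun_prop) fun z hz => pow_ne_zero _ (sq_sub_one_ne_zero_of_mem_sphere hR hz)

theorem circleIntegral_exp_mul_pow_div_eq_chooseExpSeries (x : ℝ) {R : ℝ} (hR : 1 < R)
    {s a : ℕ} (ha : a ≤ 2 * s + 1) :
    (2 * π * I)⁻¹ * ∮ z in C(0, R), exp (x * z) * z ^ a / (z ^ 2 - 1) ^ (s + 1) =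
      chooseExpSeries s (2 * s + 1 - a) x := by
  rw [← (hasSum_circleIntegral_exp_mul_pow_div x hR ha).tsum_eq, chooseExpSeries, ofReal_tsum]
  push_cast
  rfl

theorem div_sub_one_pow_succ_mul_add_one_pow {K : Type*} [Field K] {z : K} (hz : z ^ 2 - 1 ≠ 0)
    (c : K) (s : ℕ) :
    c / ((z - 1) ^ (s + 1) * (z + 1) ^ s) =
      c * z ^ 1 / (z ^ 2 - 1) ^ (s + 1) + c * z ^ 0 / (z ^ 2 - 1) ^ (s + 1) := by
  rw [show z ^ 2 - 1 = (z - 1) * (z + 1) by ring] at hz ⊢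
  obtain ⟨hm, hp⟩ := mul_ne_zero_iff.mp hz
  rw [mul_pow]
  field_simp
  ring

theorem div_sub_one_pow_mul_add_one_pow_succ {K : Type*} [Field K] {z : K} (hz : z ^ 2 - 1 ≠ 0)
    (c : K) (s : ℕ) :
    c / ((z - 1) ^ s * (z + 1) ^ (s + 1)) =
      c * z ^ 1 / (z ^ 2 - 1) ^ (s + 1) - c * z ^ 0 / (z ^ 2 - 1) ^ (s + 1) := by
  rw [show z ^ 2 - 1 = (z - 1) * (z + 1) by ring] at hz ⊢
  obtain ⟨hm, hp⟩ := mul_ne_zero_iff.mp hz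
  rw [mul_pow]
  field_simp
  ring

theorem circleIntegral_exp_div_sub_one_pow_succ_mul_add_one_pow (x : ℝ) {R : ℝ} (hR : 1 < R)
    (s : ℕ) :
    (2 * π * I)⁻¹ * ∮ z in C(0, R), exp (x * z) / ((z - 1) ^ (s + 1) * (z + 1) ^ s) =
      ((chooseExpSeries s (2 * s) x + chooseExpSeries s (2 * s + 1) x : ℝ) : ℂ) := by
  have hsplit : Set.EqOn (fun z : ℂ => exp (x * z) / ((z - 1) ^ (s + 1) * (z + 1) ^ s))
      (fun z => exp (x * z) * z ^ 1 / (z ^ 2 - 1) ^ (s + 1) +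
        exp (x * z) * z ^ 0 / (z ^ 2 - 1) ^ (s + 1)) (sphere 0 R) := fun z hz =>
    div_sub_one_pow_succ_mul_add_one_pow (sq_sub_one_ne_zero_of_mem_sphere hR hz) _ s
  rw [circleIntegral.integral_congr (one_pos.trans hR).le hsplit,
    circleIntegral.integral_add (circleIntegrable_exp_mul_pow_div _ hR s 1)
      (circleIntegrable_exp_mul_pow_div _ hR s 0), mul_add,
    circleIntegral_exp_mul_pow_div_eq_chooseExpSeries x hR (by omega),
    circleIntegral_exp_mul_pow_div_eq_chooseExpSeries x hR (by omega), ofReal_add,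
    Nat.add_sub_cancel, Nat.sub_zero]

theorem circleIntegral_exp_div_sub_one_pow_mul_add_one_pow_succ (x : ℝ) {R : ℝ} (hR : 1 < R)
    (s : ℕ) :
    (2 * π * I)⁻¹ * ∮ z in C(0, R), exp (x * z) / ((z - 1) ^ s * (z + 1) ^ (s + 1)) =
      ((chooseExpSeries s (2 * s) x - chooseExpSeries s (2 * s + 1) x : ℝ) : ℂ) := by
  have hsplit : Set.EqOn (fun z : ℂ => exp (x * z) / ((z - 1) ^ s * (z + 1) ^ (s + 1)))
      (fun z => exp (x * z) * z ^ 1 / (z ^ 2 - 1) ^ (s + 1) -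
        exp (x * z) * z ^ 0 / (z ^ 2 - 1) ^ (s + 1)) (sphere 0 R) := fun z hz =>
    div_sub_one_pow_mul_add_one_pow_succ (sq_sub_one_ne_zero_of_mem_sphere hR hz) _ s
  rw [circleIntegral.integral_congr (one_pos.trans hR).le hsplit,
    circleIntegral.integral_sub (circleIntegrable_exp_mul_pow_div _ hR s 1)
      (circleIntegrable_exp_mul_pow_div _ hR s 0), mul_sub,
    circleIntegral_exp_mul_pow_div_eq_chooseExpSeries x hR (by omega),
    circleIntegral_exp_mul_pow_div_eq_chooseExpSeries x hR (by omega), ofReal_sub,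
    Nat.add_sub_cancel, Nat.sub_zero]

theorem stmt_15 (r : ℝ) (hr : 1 < r) (Φp Φm : ℕ → ℂ → ℂ)
    (hΦp : ∀ s x, Φp s x = (2 * Real.pi * Complex.I)⁻¹ *
      ∮ z in C(0, r), Complex.exp (x * z) / ((z - 1) ^ (s + 1) * (z + 1) ^ s))
    (hΦm : ∀ s x, Φm s x = (2 * Real.pi * Complex.I)⁻¹ *
      ∮ z in C(0, r), Complex.exp (x * z) / ((z - 1) ^ s * (z + 1) ^ (s + 1))) :
    ∀ x : ℝ, 0 < x →
      Filter.Tendsto (fun s : ℕ => Φp s x / Φm s x) Filter.atTop (nhds 1) := by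
  intro x hx
  have hratio (s : ℕ) : Φp s x / Φm s x = ((
      (chooseExpSeries s (2 * s) x + chooseExpSeries s (2 * s + 1) x) /
        (chooseExpSeries s (2 * s) x - chooseExpSeries s (2 * s + 1) x) : ℝ) : ℂ) := by
    rw [hΦp, hΦm, circleIntegral_exp_div_sub_one_pow_succ_mul_add_one_pow x hr,
      circleIntegral_exp_div_sub_one_pow_mul_add_one_pow_succ x hr, ofReal_div]
  have hε : Tendsto (fun s : ℕ => x / ((2 * s : ℕ) + 1 : ℝ)) atTop (𝓝 0) := by
    simpa [Function.comp_def] using (tendsto_const_div_atTop_nhds_zero_nat x).comp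
      (tendsto_atTop_mono (fun s => by omega : ∀ s : ℕ, s ≤ 2 * s + 1) tendsto_id)
  have hreal := tendsto_add_div_sub_of_le_mul (fun s => chooseExpSeries_pos s (2 * s) hx)
    (fun s => (chooseExpSeries_pos s (2 * s + 1) hx).le)
    (fun s => chooseExpSeries_succ_le s (2 * s) hx.le) hε
  rw [funext hratio, ← ofReal_one]
  exact (continuous_ofReal.tendsto 1).comp hreal
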